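/- Let $\phi_1,\dots,\phi_{d_n} \in L^2(\Omega)$ be linearly independent functions with nonnegative values, and suppose the Gramian matrix $P_n = ((\phi_j,\phi_i))_{i,j=1}^{d_n}$ is monomial (every row and every column contains exactly one nonzero entry, which is positive). Then the Bubnov–Galerkin projection $\Pi_n$ on $L^2(\Omega)^d$, given componentwise by $\pi_n u = \sum_{j=1}^{d_n}\phi_j \sum_{i=1}^{d_n}(P_n^{-1})_{ij}(u,\phi_i)$, is $L^2(\Omega)^d_+$-positive, i.e. $\Pi_n(L^2(\Omega)^d_+) \subseteq L^2(\Omega)^d_+$. -/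

import Mathlib

/-!
A monomial matrix is inverted by transposing it and inverting its entries, so the inverse of
the Gramian `P` is entrywise nonnegative. Each moment vector
`((u_k, φ_i))_k = ∫ φ_i u` is the integral of a function with values in the cone `Y` (as
`φ_i ≥ 0`), hence lies in `Y`; so do the coefficient vectors `∑_i (P⁻¹)_{ij} (u, φ_i)` and,
pointwise, the nonnegative combination `∑_j φ_j(x) (∑_i (P⁻¹)_{ij} (u, φ_i))` of them.
-/

open MeasureTheory

/-- An order cone in a real topological vector space. -/
def IsOrderCone {E : Type*} [AddCommGroup E] [Module ℝ E] [TopologicalSpace E]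
    (C : Set E) : Prop :=
  C.Nonempty ∧ IsClosed C ∧ Convex ℝ C ∧
    (∀ t : ℝ, 0 ≤ t → ∀ x ∈ C, t • x ∈ C) ∧ C ∩ (-C) = {0}

namespace IsOrderCone

section Algebraic

variable {E : Type*} [AddCommGroup E] [Module ℝ E] [TopologicalSpace E] {C : Set E}

theorem smul_mem (hC : IsOrderCone C) {t : ℝ} (ht : 0 ≤ t) {x : E} (hx : x ∈ C) : t • x ∈ C :=
  hC.2.2.2.1 t ht x hx

theorem zero_mem (hC : IsOrderCone C) : (0 : E) ∈ C := by
  obtain ⟨x, hx⟩ := hC.1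
  simpa using hC.smul_mem le_rfl hx

theorem add_mem (hC : IsOrderCone C) {x y : E} (hx : x ∈ C) (hy : y ∈ C) : x + y ∈ C := by
  have hmid : (2⁻¹ : ℝ) • x + (2⁻¹ : ℝ) • y ∈ C :=
    hC.2.2.1 hx hy (by norm_num) (by norm_num) (by norm_num)
  simpa [smul_add, smul_smul] using hC.smul_mem zero_le_two hmid

theorem sum_smul_mem (hC : IsOrderCone C) {ι : Type*} (s : Finset ι) {c : ι → ℝ} {x : ι → E}
    (hc : ∀ i ∈ s, 0 ≤ c i) (hx : ∀ i ∈ s, x i ∈ C) : ∑ i ∈ s, c i • x i ∈ C :=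
  Finset.sum_induction _ (· ∈ C) (fun _ _ => hC.add_mem) hC.zero_mem
    fun i hi => hC.smul_mem (hc i hi) (hx i hi)

end Algebraic

variable {α : Type*} [MeasurableSpace α] {μ : Measure α} [IsFiniteMeasure μ]

theorem integral_mem {E : Type*} [NormedAddCommGroup E] [NormedSpace ℝ E] [CompleteSpace E]
    {C : Set E} (hC : IsOrderCone C) {f : α → E} (hf : Integrable f μ)
    (hfC : ∀ᵐ x ∂μ, f x ∈ C) : ∫ x, f x ∂μ ∈ C := by
  rcases eq_zero_or_neZero μ with rfl | _
  · simpa using hC.zero_mem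
  rw [← measure_smul_average]
  exact hC.smul_mem measureReal_nonneg (hC.2.2.1.average_mem hC.2.1 hfC hf)

theorem moment_mem {ι : Type*} [Fintype ι] {C : Set (ι → ℝ)} (hC : IsOrderCone C)
    (u : ι → Lp ℝ 2 μ) (hu : ∀ᵐ x ∂μ, (fun k => u k x) ∈ C)
    {g : Lp ℝ 2 μ} (hg : ∀ᵐ x ∂μ, 0 ≤ g x) : (fun k => ∫ x, u k x * g x ∂μ) ∈ C := by
  have hint : ∀ k, Integrable (fun x => g x * u k x) μ := fun k => by
    simpa [mul_comm] using L2.integrable_inner (𝕜 := ℝ) g (u k)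
  have hmoment : (fun k => ∫ x, u k x * g x ∂μ) = ∫ x, g x • fun k => u k x ∂μ := by
    ext k
    rw [eval_integral (f := fun x => g x • fun k => u k x) hint]
    simp only [Pi.smul_apply, smul_eq_mul, mul_comm]
  rw [hmoment]
  refine hC.integral_mem (Integrable.of_eval hint) ?_
  filter_upwards [hu, hg] with x hux hgx using hC.smul_mem hgx hux

end IsOrderCone

theorem MeasureTheory.Lp.coeFn_sum_smul {α 𝕜 E : Type*} [MeasurableSpace α] {μ : Measure α}
    [NormedField 𝕜] [NormedAddCommGroup E] [NormedSpace 𝕜 E] {p : ENNReal} {ι : Type*}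
    (s : Finset ι) (c : ι → 𝕜) (f : ι → Lp E p μ) :
    ∀ᵐ x ∂μ, (∑ i ∈ s, c i • f i : Lp E p μ) x = ∑ i ∈ s, c i • f i x := by
  have hsmul : ∀ᵐ x ∂μ, ∀ i : s, (c i • f i : Lp E p μ) x = c i • f i x :=
    ae_all_iff.2 fun i => Lp.coeFn_smul (c i) (f i)
  filter_upwards [Lp.coeFn_fun_finsetSum s fun i => c i • f i, hsmul] with x hsum hx
  rw [hsum]
  exact Finset.sum_congr rfl fun i hi => hx ⟨i, hi⟩

namespace Matrix

variable {n K : Type*} [Fintype n] [DecidableEq n] [Field K]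

def IsMonomial (P : Matrix n n K) : Prop :=
  (∀ i, ∃! j, P i j ≠ 0) ∧ ∀ j, ∃! i, P i j ≠ 0

-- Off the support of `P` the formula reads `0⁻¹ = 0`.
theorem IsMonomial.inv_eq {P : Matrix n n K} (hP : P.IsMonomial) :
    P⁻¹ = of fun i j => (P j i)⁻¹ := by
  refine inv_eq_right_inv (ext fun i k => ?_)
  simp only [mul_apply, of_apply, one_apply]
  split_ifs with hik
  · subst hik
    obtain ⟨j, hj, hjunique⟩ := hP.1 i
    have hoff : ∀ j' ≠ j, P i j' = 0 := fun j' hj' => not_not.1 (mt (hjunique j') hj')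
    rw [Finset.sum_eq_single j (fun j' _ hj' => by simp [hoff j' hj']) (by simp),
      mul_inv_cancel₀ hj]
  · refine Finset.sum_eq_zero fun j _ => ?_
    by_cases hij : P i j = 0
    · simp [hij]
    have hkj : P k j = 0 := by
      by_contra hkj
      exact hik ((hP.2 j).unique hij hkj)
    simp [hkj]

theorem IsMonomial.inv_nonneg [LinearOrder K] [IsStrictOrderedRing K] {P : Matrix n n K}
    (hP : P.IsMonomial) (hnonneg : ∀ i j, 0 ≤ P i j) (i j : n) : 0 ≤ P⁻¹ i j := by
  rw [hP.inv_eq]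
  exact _root_.inv_nonneg.2 (hnonneg j i)

end Matrix

theorem stmt17_general {d m : ℕ} {Ω : Type*} [MeasurableSpace Ω]
    (μ : Measure Ω) [IsFiniteMeasure μ]
    (Y : Set (Fin d → ℝ)) (hY : IsOrderCone Y)
    (φ : Fin m → Lp ℝ 2 μ)
    (hφpos : ∀ i, ∀ᵐ x ∂μ, 0 ≤ φ i x)
    (P : Matrix (Fin m) (Fin m) ℝ)
    (hProw : ∀ i, ∃! j, P i j ≠ 0)
    (hPcol : ∀ j, ∃! i, P i j ≠ 0)
    (hPpos : ∀ i j, P i j ≠ 0 → 0 < P i j)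
    (u : Fin d → Lp ℝ 2 μ)
    (hu : ∀ᵐ x ∂μ, (fun k => u k x) ∈ Y) :
    ∀ᵐ x ∂μ,
      (fun k => ((∑ j, (∑ i, P⁻¹ i j * ∫ y, u k y * φ i y ∂μ) • φ j :
        Lp ℝ 2 μ) : Ω → ℝ) x) ∈ Y := by
  have hPinv : ∀ i j, 0 ≤ P⁻¹ i j :=
    Matrix.IsMonomial.inv_nonneg ⟨hProw, hPcol⟩ fun i j =>
      (eq_or_ne (P i j) 0).elim (fun h => h.ge) fun h => (hPpos i j h).le
  have hcoeff : ∀ j, ∑ i, P⁻¹ i j • (fun k => ∫ y, u k y * φ i y ∂μ) ∈ Y := fun j =>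
    hY.sum_smul_mem _ (fun i _ => hPinv i j) fun i _ => hY.moment_mem u hu (hφpos i)
  filter_upwards [ae_all_iff.2 hφpos, ae_all_iff.2 fun k : Fin d =>
    Lp.coeFn_sum_smul Finset.univ (fun j => ∑ i, P⁻¹ i j * ∫ y, u k y * φ i y ∂μ) φ]
    with x hφx hx
  convert hY.sum_smul_mem Finset.univ (fun j _ => hφx j) fun j _ => hcoeff j using 1
  ext k
  simp only [hx k, Finset.sum_apply, Pi.smul_apply, smul_eq_mul, Finset.sum_mul,
    Finset.mul_sum]
  exact Finset.sum_congr rfl fun j _ => Finset.sum_congr rfl fun i _ => by ring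

/-- If the (linearly independent) basis functions `φ₁, …, φₘ ∈ L²(Ω)` have nonnegative
values and the Gramian `Pᵢⱼ = (φⱼ, φᵢ)` is a monomial matrix, then the Bubnov–Galerkin
projection `πₙ u = ∑ⱼ (∑ᵢ (Pₙ⁻¹)ᵢⱼ (u, φᵢ)) φⱼ`, acting componentwise, is
`L²(Ω)^d₊`-positive. -/
theorem stmt17 {d m : ℕ} {Ω : Type*} [MeasurableSpace Ω]
    (μ : Measure Ω) [IsFiniteMeasure μ] (hμ : 0 < μ Set.univ)
    (Y : Set (Fin d → ℝ)) (hY : IsOrderCone Y)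
    (φ : Fin m → Lp ℝ 2 μ) (hφind : LinearIndependent ℝ φ)
    (hφpos : ∀ i, ∀ᵐ x ∂μ, 0 ≤ φ i x)
    (P : Matrix (Fin m) (Fin m) ℝ)
    (hP : P = Matrix.of fun i j => ∫ x, φ j x * φ i x ∂μ)
    (hProw : ∀ i, ∃! j, P i j ≠ 0)
    (hPcol : ∀ j, ∃! i, P i j ≠ 0)
    (hPpos : ∀ i j, P i j ≠ 0 → 0 < P i j)
    (u : Fin d → Lp ℝ 2 μ)
    (hu : ∀ᵐ x ∂μ, (fun k => u k x) ∈ Y) :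
    ∀ᵐ x ∂μ,
      (fun k => ((∑ j, (∑ i, P⁻¹ i j * ∫ y, u k y * φ i y ∂μ) • φ j :
        Lp ℝ 2 μ) : Ω → ℝ) x) ∈ Y :=
  stmt17_general μ Y hY φ hφpos P hProw hPcol hPpos u hu
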